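/- arXiv:1509.09167 — 4 statements merged into one kernel-verified Lean document; each statement's English description precedes it below -/
import Mathlib

section
/- Let a > 0, b < 0, c > 0, and let X be a random variable with Gamma distribution of shape a/2 and rate −b/2, i.e., with density f(x) = (Γ(a/2))^{-1} (−b/2)^{a/2} x^{a/2−1} e^{bx/2} on (0,∞). Then E[1/(X+c)] = ψ_c / c, where ψ_c = (−bc/2)^{a/2} e^{−bc/2} Γ(1−a/2, −bc/2) and Γ(·,·) is the upper incomplete gamma function. -/
open Real Set

/-- Upper incomplete gamma function `Γ(α, y) = ∫_y^∞ e^{−t} t^{α−1} dt`. -/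
noncomputable def uiGamma (α y : ℝ) : ℝ := ∫ t in Set.Ioi y, Real.exp (-t) * t ^ (α - 1)

/-- Density of the Gamma(a/2, −b/2) distribution at `x`. -/
noncomputable def gDens (a b x : ℝ) : ℝ :=
  (Real.Gamma (a / 2))⁻¹ * (-b / 2) ^ (a / 2) * x ^ (a / 2 - 1) * Real.exp (b * x / 2)

/-- `ψ_c = (−bc/2)^{a/2} e^{−bc/2} Γ(1−a/2, −bc/2)`. -/
noncomputable def psi (a b c : ℝ) : ℝ :=
  (-(b * c) / 2) ^ (a / 2) * Real.exp (-(b * c) / 2) * uiGamma (1 - a / 2) (-(b * c) / 2)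

/-!
For `x > 0`, `(x + c)⁻¹ = ∫₀^∞ e^{-(x+c)s} ds`. Exchanging the order of integration turns
`E[(X + c)⁻¹]` into `∫₀^∞ e^{-cs} E[e^{-sX}] ds`, and the Laplace transform of the Gamma law is
`E[e^{-sX}] = (λ / (λ + s))^α` with `α = a/2`, `λ = -b/2`. The substitution `t = c (λ + s)` then
identifies `∫₀^∞ e^{-cs} (λ + s)^{-α} ds` with `c^{α-1} e^{λc} Γ(1 - α, λc)`.
-/

open MeasureTheory

theorem integral_comp_add_right_Ioi {E : Type*} [NormedAddCommGroup E] [NormedSpace ℝ E]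
    (f : ℝ → E) (a d : ℝ) : ∫ x in Ioi a, f (x + d) = ∫ x in Ioi (a + d), f x := by
  have hpre : (· + d) ⁻¹' Ioi (a + d) = Ioi a := by ext x; simp
  conv_rhs => rw [← (measurePreserving_add_right volume d).map_eq]
  rw [(measurableEmbedding_addRight d).setIntegral_map, hpre]

theorem integral_exp_neg_mul_Ioi_zero {r : ℝ} (hr : 0 < r) :
    ∫ x in Ioi 0, exp (-(r * x)) = r⁻¹ := by
  simpa [neg_mul, neg_div_neg_eq, one_div] using integral_exp_mul_Ioi (neg_lt_zero.2 hr) 0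

theorem integrable_exp_neg_add_mul_mul_prod {f : ℝ → ℝ} (hf : IntegrableOn f (Ioi 0)) {c : ℝ}
    (hc : 0 < c) :
    Integrable (fun p : ℝ × ℝ => exp (-((p.1 + c) * p.2)) * f p.1)
      ((volume.restrict (Ioi 0)).prod (volume.restrict (Ioi 0))) := by
  have hmeas : AEStronglyMeasurable (fun p : ℝ × ℝ => exp (-((p.1 + c) * p.2)) * f p.1)
      ((volume.restrict (Ioi 0)).prod (volume.restrict (Ioi 0))) :=
    (by fun_prop : Continuous fun p : ℝ × ℝ => exp (-((p.1 + c) * p.2))).aestronglyMeasurable.mul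
      hf.aestronglyMeasurable.comp_fst
  rw [integrable_prod_iff hmeas]
  refine ⟨?_, (hf.norm.const_mul c⁻¹).mono' hmeas.norm.integral_prod_right' ?_⟩
  · filter_upwards [ae_restrict_mem measurableSet_Ioi] with x (hx : 0 < x)
    simpa only [neg_mul] using (exp_neg_integrableOn_Ioi 0 (by linarith : 0 < x + c)).mul_const _
  · filter_upwards [ae_restrict_mem measurableSet_Ioi] with x (hx : 0 < x)
    have hxc : 0 < x + c := by linarith
    simp only [norm_mul, norm_of_nonneg (exp_pos _).le]
    rw [integral_mul_const, integral_exp_neg_mul_Ioi_zero hxc, norm_of_nonneg (by positivity)]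
    gcongr
    linarith

theorem integral_inv_add_mul_eq_integral_exp_neg_mul {f : ℝ → ℝ} (hf : IntegrableOn f (Ioi 0))
    {c : ℝ} (hc : 0 < c) :
    ∫ x in Ioi 0, (x + c)⁻¹ * f x
      = ∫ s in Ioi 0, exp (-(c * s)) * ∫ x in Ioi 0, exp (-(s * x)) * f x := by
  calc ∫ x in Ioi 0, (x + c)⁻¹ * f x
      = ∫ x in Ioi 0, ∫ s in Ioi 0, exp (-((x + c) * s)) * f x := by
        refine setIntegral_congr_fun measurableSet_Ioi fun x (hx : 0 < x) => ?_
        rw [integral_mul_const, integral_exp_neg_mul_Ioi_zero (by linarith)]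
    _ = ∫ s in Ioi 0, ∫ x in Ioi 0, exp (-((x + c) * s)) * f x :=
        integral_integral_swap (integrable_exp_neg_add_mul_mul_prod hf hc)
    _ = ∫ s in Ioi 0, exp (-(c * s)) * ∫ x in Ioi 0, exp (-(s * x)) * f x := by
        congr 1 with s
        rw [← integral_const_mul]
        congr 1 with x
        rw [← mul_assoc, ← exp_add]
        ring_nf

theorem integral_exp_neg_mul_mul_rpow_mul_exp_neg_mul {α l s : ℝ} (hα : 0 < α) (hls : 0 < l + s) :
    ∫ x in Ioi 0, exp (-(s * x)) * (x ^ (α - 1) * exp (-(l * x))) = Gamma α * (l + s) ^ (-α) := by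
  calc ∫ x in Ioi 0, exp (-(s * x)) * (x ^ (α - 1) * exp (-(l * x)))
      = ∫ x in Ioi 0, x ^ (α - 1) * exp (-((l + s) * x)) := by
        congr 1 with x
        rw [mul_left_comm, ← exp_add]
        ring_nf
    _ = Gamma α * (l + s) ^ (-α) := by
        rw [integral_rpow_mul_exp_neg_mul_Ioi hα hls, one_div, inv_rpow hls.le, rpow_neg hls.le,
          mul_comm]

theorem integrableOn_rpow_mul_exp_neg_mul_Ioi {α l : ℝ} (hα : 0 < α) (hl : 0 < l) :
    IntegrableOn (fun x : ℝ => x ^ (α - 1) * exp (-(l * x))) (Ioi 0) := by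
  simpa only [rpow_one, neg_mul] using
    integrableOn_rpow_mul_exp_neg_mul_rpow (s := α - 1) (by linarith) one_pos hl

theorem integral_exp_neg_mul_mul_add_rpow_neg (α : ℝ) {l c : ℝ} (hl : 0 ≤ l) (hc : 0 < c) :
    ∫ s in Ioi 0, exp (-(c * s)) * (l + s) ^ (-α)
      = c ^ (α - 1) * exp (l * c) * uiGamma (1 - α) (l * c) := by
  have hsubst : uiGamma (1 - α) (l * c)
      = c ^ (1 - α) * exp (-(l * c)) * ∫ s in Ioi 0, exp (-(c * s)) * (l + s) ^ (-α) := by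
    rw [uiGamma, mul_comm l c, ← integral_comp_mul_left_Ioi' _ _ hc, smul_eq_mul,
      ← zero_add l, ← integral_comp_add_right_Ioi, zero_add, ← integral_const_mul,
      ← integral_const_mul]
    refine setIntegral_congr_fun measurableSet_Ioi fun s (hs : 0 < s) => ?_
    rw [sub_sub_cancel_left, mul_rpow hc.le (by linarith), add_comm s l, mul_add, neg_add,
      exp_add, sub_eq_add_neg, rpow_add hc, rpow_one]
    ring
  have hcancel : c ^ (α - 1) * exp (l * c) * (c ^ (1 - α) * exp (-(l * c))) = 1 := by
    rw [mul_mul_mul_comm, ← rpow_add hc, ← exp_add]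
    simp
  rw [hsubst, ← mul_assoc, hcancel, one_mul]

theorem expectation_inv_shift (a b c : ℝ) (ha : 0 < a) (hb : b < 0) (hc : 0 < c) :
    (∫ x in Set.Ioi (0 : ℝ), (x + c)⁻¹ * gDens a b x) = psi a b c / c := by
  set α := a / 2 with hα_def
  set l := -b / 2
  have hα : 0 < α := by positivity
  have hl : 0 < l := by simp only [l]; linarith
  have hdens : ∀ x, (x + c)⁻¹ * gDens a b x
      = (Gamma α)⁻¹ * l ^ α * ((x + c)⁻¹ * (x ^ (α - 1) * exp (-(l * x)))) := fun x => by
    rw [gDens, show b * x / 2 = -(l * x) by ring]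
    ring
  calc ∫ x in Ioi 0, (x + c)⁻¹ * gDens a b x
      = (Gamma α)⁻¹ * l ^ α * ∫ s in Ioi 0, exp (-(c * s)) *
          ∫ x in Ioi 0, exp (-(s * x)) * (x ^ (α - 1) * exp (-(l * x))) := by
        simp_rw [hdens]
        rw [integral_const_mul, integral_inv_add_mul_eq_integral_exp_neg_mul
          (integrableOn_rpow_mul_exp_neg_mul_Ioi hα hl) hc]
    _ = l ^ α * ∫ s in Ioi 0, exp (-(c * s)) * (l + s) ^ (-α) := by
        rw [mul_right_comm, mul_comm _ (l ^ α), ← integral_const_mul]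
        congr 1
        refine setIntegral_congr_fun measurableSet_Ioi fun s (hs : 0 < s) => ?_
        rw [integral_exp_neg_mul_mul_rpow_mul_exp_neg_mul hα (by linarith)]
        field_simp [(Gamma_pos_of_pos hα).ne']
    _ = psi a b c / c := by
        rw [integral_exp_neg_mul_mul_add_rpow_neg α hl.le hc, psi,
          show -(b * c) / 2 = l * c by ring, ← hα_def, mul_rpow hl.le hc.le, rpow_sub_one hc.ne']
        field_simp
end

section
/- Let a > 0, b < 0, c > 0, and let X ~ Gamma(a/2, −b/2). Then E[X/(X+c)²] = (a/(2c)) ψ_c + (b/2)(1 − ψ_c), where ψ_c = (−bc/2)^{a/2} e^{−bc/2} Γ(1−a/2, −bc/2). -/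
open Real Set

/-!
Write `α = a/2`, `β = -b/2` and `w(x) = x^(α-1) e^(-βx)`, so that `gDens a b = β^α/Γ(α) · w`.
Differentiating `x^α e^(-βx) / (x+c)` and integrating over `(0, ∞)` gives
`E[X/(X+c)²] = α E[1/(X+c)] - β E[X/(X+c)]`, and `E[X/(X+c)] = 1 - c E[1/(X+c)]`.
For the remaining Stieltjes transform, `1/(x+c) = ∫₀^∞ e^(-(x+c)s) ds` and Fubini give
`∫ w(x)/(x+c) dx = Γ(α) ∫₀^∞ e^(-cs) (s+β)^(-α) ds`, and the substitution `t = c(s+β)` turns this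
into `Γ(α) c^(α-1) e^(βc) Γ(1-α, βc)`, i.e. `E[1/(X+c)] = ψ_c / c`.
-/

open MeasureTheory Filter Topology

lemma setIntegral_Ioi_zero_comp_add_right {E : Type*} [NormedAddCommGroup E] [NormedSpace ℝ E]
    (f : ℝ → E) (y : ℝ) : ∫ u in Ioi 0, f (u + y) = ∫ t in Ioi y, f t := by
  have h := (measurePreserving_add_right volume y).setIntegral_preimage_emb
    (measurableEmbedding_addRight y) f (Ioi y)
  rwa [preimage_add_const_Ioi, sub_self] at h

lemma integral_exp_neg_mul_Ioi_zero_s5 {p : ℝ} (hp : 0 < p) :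
    ∫ s in Ioi 0, exp (-(p * s)) = p⁻¹ := by
  simpa [neg_mul, neg_div, one_div] using integral_exp_mul_Ioi (neg_lt_zero.mpr hp) 0

lemma IntegrableOn.bdd_mul_of_abs_le {X : Type*} [MeasurableSpace X] {μ : Measure X}
    {f φ : X → ℝ} {s : Set X} {C : ℝ} (hf : IntegrableOn f s μ) (hs : MeasurableSet s)
    (hφ : Measurable φ) (hC : ∀ x ∈ s, |φ x| ≤ C) :
    IntegrableOn (fun x => φ x * f x) s μ :=
  hf.bdd_mul hφ.aestronglyMeasurable ((ae_restrict_iff' hs).mpr (ae_of_all _ hC))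

lemma integrableOn_rpow_mul_exp_neg_mul {s β : ℝ} (hs : -1 < s) (hβ : 0 < β) :
    IntegrableOn (fun x : ℝ => x ^ s * exp (-(β * x))) (Ioi 0) := by
  simpa only [rpow_one, neg_mul] using integrableOn_rpow_mul_exp_neg_mul_rpow hs one_pos hβ

section GammaKernel

variable {α β c : ℝ}

lemma uiGamma_one_sub_mul (hβ : 0 ≤ β) (hc : 0 < c) :
    uiGamma (1 - α) (c * β)
      = c ^ (1 - α) * exp (-(c * β)) * ∫ s in Ioi 0, exp (-(c * s)) * (s + β) ^ (-α) := by
  have hsub : ∀ s ∈ Ioi (0 : ℝ), exp (-(c * (s + β))) * (c * (s + β)) ^ (1 - α - 1)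
      = c ^ (-α) * exp (-(c * β)) * (exp (-(c * s)) * (s + β) ^ (-α)) := by
    intro s (hs : 0 < s)
    rw [sub_sub_cancel_left, mul_rpow hc.le (by positivity), mul_add, neg_add, exp_add]
    ring
  have h := integral_comp_mul_left_Ioi (fun t => exp (-t) * t ^ (1 - α - 1)) β hc
  rw [← setIntegral_Ioi_zero_comp_add_right, setIntegral_congr_fun measurableSet_Ioi hsub,
    integral_const_mul, smul_eq_mul] at h
  rw [uiGamma, ← mul_inv_cancel_left₀ hc.ne' (∫ t in Ioi (c * β), _), ← h,
    show (1 - α) = 1 + -α by ring, rpow_add hc, rpow_one]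
  ring

lemma integrableOn_inv_add_mul_rpow_mul_exp_neg_mul (hα : 0 < α) (hβ : 0 < β) (hc : 0 < c) :
    IntegrableOn (fun x => (x + c)⁻¹ * (x ^ (α - 1) * exp (-(β * x)))) (Ioi 0) :=
  IntegrableOn.bdd_mul_of_abs_le (integrableOn_rpow_mul_exp_neg_mul (by linarith) hβ)
    measurableSet_Ioi (by fun_prop) (C := c⁻¹) fun x (hx : 0 < x) => by
      rw [abs_of_pos (by positivity)]
      exact inv_anti₀ hc (by linarith)

lemma integrableOn_div_add_mul_rpow_mul_exp_neg_mul (hα : 0 < α) (hβ : 0 < β) (hc : 0 < c) :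
    IntegrableOn (fun x => x / (x + c) * (x ^ (α - 1) * exp (-(β * x)))) (Ioi 0) :=
  IntegrableOn.bdd_mul_of_abs_le (integrableOn_rpow_mul_exp_neg_mul (by linarith) hβ)
    measurableSet_Ioi (by fun_prop) (C := 1) fun x (hx : 0 < x) => by
      rw [abs_of_pos (by positivity), div_le_one (by positivity)]
      linarith

lemma integrableOn_div_add_sq_mul_rpow_mul_exp_neg_mul (hα : 0 < α) (hβ : 0 < β) (hc : 0 < c) :
    IntegrableOn (fun x => x / (x + c) ^ 2 * (x ^ (α - 1) * exp (-(β * x)))) (Ioi 0) :=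
  IntegrableOn.bdd_mul_of_abs_le (integrableOn_rpow_mul_exp_neg_mul (by linarith) hβ)
    measurableSet_Ioi (by fun_prop) (C := c⁻¹) fun x (hx : 0 < x) => by
      rw [abs_of_pos (by positivity), div_le_iff₀ (by positivity), inv_mul_eq_div, le_div_iff₀ hc]
      nlinarith

lemma integral_inv_add_mul_rpow_mul_exp_neg_mul (hα : 0 < α) (hβ : 0 < β) (hc : 0 < c) :
    ∫ x in Ioi 0, (x + c)⁻¹ * (x ^ (α - 1) * exp (-(β * x)))
      = Gamma α * ∫ s in Ioi 0, exp (-(c * s)) * (s + β) ^ (-α) := by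
  set F : ℝ → ℝ → ℝ := fun x s => x ^ (α - 1) * exp (-(β * x)) * exp (-((x + c) * s))
  have hF_nonneg : ∀ x ∈ Ioi (0 : ℝ), ∀ s, 0 ≤ F x s := fun x (hx : 0 < x) s => by positivity
  have hF_inner : ∀ x ∈ Ioi (0 : ℝ),
      ∫ s in Ioi 0, F x s = (x + c)⁻¹ * (x ^ (α - 1) * exp (-(β * x))) := fun x (hx : 0 < x) => by
    rw [integral_const_mul, integral_exp_neg_mul_Ioi_zero_s5 (by positivity), mul_comm]
  have hF_int : Integrable (Function.uncurry F)
      ((volume.restrict (Ioi 0)).prod (volume.restrict (Ioi 0))) := by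
    refine (integrable_prod_iff (by fun_prop)).mpr ⟨?_, ?_⟩
    · refine (ae_restrict_iff' measurableSet_Ioi).mpr (ae_of_all _ fun x (hx : 0 < x) => ?_)
      simp only [Function.uncurry_apply_pair, F, ← neg_mul]
      exact (exp_neg_integrableOn_Ioi 0 (by positivity : 0 < x + c)).const_mul _
    · refine (integrableOn_inv_add_mul_rpow_mul_exp_neg_mul hα hβ hc).congr_fun
        (fun x hx => ?_) measurableSet_Ioi
      simp only [Function.uncurry_apply_pair]
      rw [← hF_inner x hx]
      exact setIntegral_congr_fun measurableSet_Ioi fun s _ =>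
        (Real.norm_of_nonneg (hF_nonneg x hx s)).symm
  have hF_outer : ∀ s ∈ Ioi (0 : ℝ),
      ∫ x in Ioi 0, F x s = Gamma α * (exp (-(c * s)) * (s + β) ^ (-α)) := fun s (hs : 0 < s) => by
    have hFs : ∀ x, F x s = exp (-(c * s)) * (x ^ (α - 1) * exp (-((β + s) * x))) := fun x => by
      simp only [F]
      rw [mul_assoc, ← exp_add, show -(β * x) + -((x + c) * s) = -(c * s) + -((β + s) * x) by ring,
        exp_add]
      ring
    simp only [hFs]
    rw [integral_const_mul, integral_rpow_mul_exp_neg_mul_Ioi hα (by positivity),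
      one_div, inv_rpow (by positivity), ← rpow_neg (by positivity), add_comm β]
    ring
  calc ∫ x in Ioi 0, (x + c)⁻¹ * (x ^ (α - 1) * exp (-(β * x)))
      = ∫ x in Ioi 0, ∫ s in Ioi 0, F x s := (setIntegral_congr_fun measurableSet_Ioi hF_inner).symm
    _ = ∫ s in Ioi 0, ∫ x in Ioi 0, F x s := integral_integral_swap hF_int
    _ = Gamma α * ∫ s in Ioi 0, exp (-(c * s)) * (s + β) ^ (-α) := by
      rw [setIntegral_congr_fun measurableSet_Ioi hF_outer, integral_const_mul]

lemma integral_inv_add_mul_rpow_mul_exp_neg_mul_eq_uiGamma (hα : 0 < α) (hβ : 0 < β)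
    (hc : 0 < c) :
    ∫ x in Ioi 0, (x + c)⁻¹ * (x ^ (α - 1) * exp (-(β * x)))
      = Gamma α / β ^ α * ((β * c) ^ α * exp (β * c) * uiGamma (1 - α) (β * c)) / c := by
  rw [integral_inv_add_mul_rpow_mul_exp_neg_mul hα hβ hc, mul_comm β c,
    uiGamma_one_sub_mul hβ.le hc, mul_rpow hc.le hβ.le, rpow_sub hc, rpow_one, exp_neg]
  have hcα : c ^ α ≠ 0 := (rpow_pos_of_pos hc α).ne'
  have hβα : β ^ α ≠ 0 := (rpow_pos_of_pos hβ α).ne'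
  field_simp

lemma integral_div_add_mul_rpow_mul_exp_neg_mul (hα : 0 < α) (hβ : 0 < β) (hc : 0 < c) :
    ∫ x in Ioi 0, x / (x + c) * (x ^ (α - 1) * exp (-(β * x)))
      = Gamma α / β ^ α - c * ∫ x in Ioi 0, (x + c)⁻¹ * (x ^ (α - 1) * exp (-(β * x))) := by
  have hsplit : ∀ x ∈ Ioi (0 : ℝ), x / (x + c) * (x ^ (α - 1) * exp (-(β * x)))
      = x ^ (α - 1) * exp (-(β * x)) - c * ((x + c)⁻¹ * (x ^ (α - 1) * exp (-(β * x)))) :=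
    fun x (hx : 0 < x) => by field_simp; ring
  rw [setIntegral_congr_fun measurableSet_Ioi hsplit,
    integral_sub (integrableOn_rpow_mul_exp_neg_mul (by linarith) hβ)
      ((integrableOn_inv_add_mul_rpow_mul_exp_neg_mul hα hβ hc).const_mul c),
    integral_const_mul, integral_rpow_mul_exp_neg_mul_Ioi hα hβ, one_div, inv_rpow hβ.le,
    inv_mul_eq_div]

lemma integral_div_add_sq_mul_rpow_mul_exp_neg_mul (hα : 0 < α) (hβ : 0 < β) (hc : 0 < c) :
    ∫ x in Ioi 0, x / (x + c) ^ 2 * (x ^ (α - 1) * exp (-(β * x)))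
      = α * (∫ x in Ioi 0, (x + c)⁻¹ * (x ^ (α - 1) * exp (-(β * x))))
        - β * ∫ x in Ioi 0, x / (x + c) * (x ^ (α - 1) * exp (-(β * x))) := by
  set f : ℝ → ℝ := fun x => x ^ α * exp (-(β * x)) / (x + c)
  have hint₁ := integrableOn_inv_add_mul_rpow_mul_exp_neg_mul hα hβ hc
  have hint₂ := integrableOn_div_add_mul_rpow_mul_exp_neg_mul hα hβ hc
  have hint₃ := integrableOn_div_add_sq_mul_rpow_mul_exp_neg_mul hα hβ hc
  have hf_deriv : ∀ x ∈ Ioi (0 : ℝ), HasDerivAt f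
      (α * ((x + c)⁻¹ * (x ^ (α - 1) * exp (-(β * x))))
        - β * (x / (x + c) * (x ^ (α - 1) * exp (-(β * x))))
        - x / (x + c) ^ 2 * (x ^ (α - 1) * exp (-(β * x)))) x := by
    intro x (hx : 0 < x)
    have h := (((hasDerivAt_rpow_const (p := α) (Or.inl hx.ne')).mul
      (((hasDerivAt_id x).const_mul β).neg.exp)).div
      ((hasDerivAt_id x).add_const c) (by positivity : x + c ≠ 0))
    refine h.congr_deriv ?_
    simp only [id, Pi.mul_apply, Pi.neg_apply]
    rw [rpow_sub_one hx.ne']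
    field_simp
    ring
  have hf_cont : ContinuousWithinAt f (Ici 0) 0 := by
    have hpow : ContinuousAt (fun x : ℝ => x ^ α) 0 := continuousAt_rpow_const 0 α (Or.inr hα.le)
    exact ContinuousAt.continuousWithinAt (by fun_prop (disch := positivity))
  have hf_lim : Tendsto f atTop (𝓝 0) := by
    have h := (tendsto_rpow_mul_exp_neg_mul_atTop_nhds_zero α β hβ).mul
      (tendsto_inv_atTop_zero.comp (tendsto_atTop_add_const_right _ c tendsto_id))
    rw [mul_zero] at h
    exact h.congr fun x => by simp [f, div_eq_mul_inv]
  have hint₁₂ : IntegrableOn (fun x => α * ((x + c)⁻¹ * (x ^ (α - 1) * exp (-(β * x))))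
      - β * (x / (x + c) * (x ^ (α - 1) * exp (-(β * x))))) (Ioi 0) :=
    (hint₁.const_mul α).sub (hint₂.const_mul β)
  have hFTC := integral_Ioi_of_hasDerivAt_of_tendsto hf_cont hf_deriv (hint₁₂.sub hint₃) hf_lim
  rw [integral_sub hint₁₂ hint₃,
    integral_sub (hint₁.const_mul α) (hint₂.const_mul β), integral_const_mul, integral_const_mul]
    at hFTC
  simp only [f, zero_rpow hα.ne', zero_mul, zero_div, sub_zero] at hFTC
  linarith

end GammaKernel

lemma setIntegral_mul_gDens (φ : ℝ → ℝ) (a b : ℝ) :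
    ∫ x in Ioi 0, φ x * gDens a b x
      = (Gamma (a / 2))⁻¹ * (-b / 2) ^ (a / 2)
        * ∫ x in Ioi 0, φ x * (x ^ (a / 2 - 1) * exp (-(-b / 2 * x))) := by
  rw [← integral_const_mul]
  congr 1 with x
  rw [gDens, show -(-b / 2 * x) = b * x / 2 by ring]
  ring

lemma psi_eq (a b c : ℝ) :
    psi a b c = (-b / 2 * c) ^ (a / 2) * exp (-b / 2 * c) * uiGamma (1 - a / 2) (-b / 2 * c) := by
  rw [psi, show -(b * c) / 2 = -b / 2 * c by ring]

theorem expectation_X_div_shift_sq (a b c : ℝ) (ha : 0 < a) (hb : b < 0) (hc : 0 < c) :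
    (∫ x in Set.Ioi (0 : ℝ), x / (x + c) ^ 2 * gDens a b x)
      = a / (2 * c) * psi a b c + b / 2 * (1 - psi a b c) := by
  have hα : 0 < a / 2 := by positivity
  have hβ : 0 < -b / 2 := by linarith
  rw [setIntegral_mul_gDens, integral_div_add_sq_mul_rpow_mul_exp_neg_mul hα hβ hc,
    integral_div_add_mul_rpow_mul_exp_neg_mul hα hβ hc,
    integral_inv_add_mul_rpow_mul_exp_neg_mul_eq_uiGamma hα hβ hc, ← psi_eq]
  have hΓ : Gamma (a / 2) ≠ 0 := (Gamma_pos_of_pos hα).ne'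
  have hP : (-b / 2) ^ (a / 2) ≠ 0 := (rpow_pos_of_pos hβ _).ne'
  generalize Gamma (a / 2) = G at *
  generalize (-b / 2) ^ (a / 2) = P at *
  field_simp
  ring
end

section
/- Let a > 0, b < 0, c > 0, and let X ~ Gamma(a/2, −b/2). Then E[X²/(X+c)²] = ((a+2−bc)(1 − ψ_c) − a)/2, where ψ_c = (−bc/2)^{a/2} e^{−bc/2} Γ(1−a/2, −bc/2). -/
open Real Set

/-!
Put `α = a/2`, `r = -b/2`, `k(x) = x^(α-1) e^(-rx)` and `S(c) = ∫₀^∞ k(x)/(x+c) dx`. Expanding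
`x²/(x+c)² = 1 - 2c/(x+c) + c²/(x+c)²`, the expectation involves `∫ k`, `S(c)` and
`∫ k/(x+c)²`; integrating the derivative of `x^α e^(-rx)/(x+c)` over `(0, ∞)` eliminates the last
one. Differentiating under the integral gives `S' = -∫ k/(x+c)²`, so the same identity shows that
`e^(-rc) c^(1-α) S(c) - Γ(α) Γ(1-α, rc)` has zero derivative on `(0, ∞)`; it tends to `0` as
`c → ∞`, hence vanishes, which gives `S(c) = Γ(α) c^(α-1) e^(rc) Γ(1-α, rc)` and so `ψ_c`.
-/

open MeasureTheory Filter Topology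

noncomputable def gammaKernel (α r x : ℝ) : ℝ := x ^ (α - 1) * exp (-(r * x))

section GammaKernel

variable {α r c : ℝ}

lemma gammaKernel_nonneg {x : ℝ} (hx : 0 ≤ x) : 0 ≤ gammaKernel α r x := by
  unfold gammaKernel; positivity

lemma continuousOn_gammaKernel : ContinuousOn (gammaKernel α r) (Ioi 0) :=
  ContinuousOn.mul
    (fun x hx => (continuousAt_rpow_const x _ (.inl (ne_of_gt hx))).continuousWithinAt)
    (by fun_prop)

lemma integrableOn_gammaKernel (hα : 0 < α) (hr : 0 < r) :
    IntegrableOn (gammaKernel α r) (Ioi 0) := by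
  refine (integrableOn_rpow_mul_exp_neg_mul_rpow (s := α - 1) (by linarith) one_pos hr).congr_fun
    (fun x _ => ?_) measurableSet_Ioi
  simp [gammaKernel]

lemma integral_gammaKernel (hα : 0 < α) (hr : 0 < r) :
    ∫ x in Ioi 0, gammaKernel α r x = (1 / r) ^ α * Gamma α :=
  integral_rpow_mul_exp_neg_mul_Ioi hα hr

lemma integrableOn_gammaKernel_div_add_pow (hα : 0 < α) (hr : 0 < r) (hc : 0 < c) (k : ℕ) :
    IntegrableOn (fun x => gammaKernel α r x / (x + c) ^ k) (Ioi 0) := by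
  have hmeas : ContinuousOn (fun x => gammaKernel α r x / (x + c) ^ k) (Ioi 0) :=
    continuousOn_gammaKernel.div (by fun_prop) fun x (hx : 0 < x) => by positivity
  refine ((integrableOn_gammaKernel hα hr).mul_const (c ^ k)⁻¹).mono'
    (hmeas.aestronglyMeasurable measurableSet_Ioi) ?_
  filter_upwards [self_mem_ae_restrict measurableSet_Ioi] with x (hx : 0 < x)
  have hk := gammaKernel_nonneg (α := α) (r := r) hx.le
  rw [Real.norm_of_nonneg (by positivity), div_eq_mul_inv]
  gcongr
  linarith

noncomputable def gammaStieltjes (α r y : ℝ) : ℝ := ∫ x in Ioi 0, gammaKernel α r x / (x + y)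

lemma hasDerivAt_rpow_mul_exp_neg_mul_div_add {x : ℝ} (hx : x ≠ 0) (hxc : x + c ≠ 0) :
    HasDerivAt (fun y => y ^ α * exp (-(r * y)) / (y + c))
      (-r * gammaKernel α r x + (r * c + α - 1) * (gammaKernel α r x / (x + c))
        + c * (gammaKernel α r x / (x + c) ^ 2)) x := by
  have hexp : HasDerivAt (fun y => exp (-(r * y))) (exp (-(r * x)) * -r) x := by
    simpa using ((hasDerivAt_id x).const_mul r).neg.exp
  refine (((hasDerivAt_rpow_const (p := α) (.inl hx)).mul hexp).div
    ((hasDerivAt_id x).add_const c) hxc).congr_deriv ?_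
  simp only [gammaKernel, id, Pi.mul_apply, rpow_sub_one hx]
  field_simp
  ring

/-- Integration by parts against `x ^ α * exp (-(r * x)) / (x + c)`, which vanishes at both ends. -/
lemma mul_integral_gammaKernel_div_add_sq (hα : 0 < α) (hr : 0 < r) (hc : 0 < c) :
    c * ∫ x in Ioi 0, gammaKernel α r x / (x + c) ^ 2
      = r * (∫ x in Ioi 0, gammaKernel α r x)
        - (r * c + α - 1) * gammaStieltjes α r c := by
  set g : ℝ → ℝ := fun x => x ^ α * exp (-(r * x)) / (x + c)
  have h1 := (integrableOn_gammaKernel hα hr).const_mul (-r)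
  have h2 := (integrableOn_gammaKernel_div_add_pow hα hr hc 1).const_mul (r * c + α - 1)
  have h3 := (integrableOn_gammaKernel_div_add_pow hα hr hc 2).const_mul c
  simp only [pow_one] at h2
  have h12 : IntegrableOn (fun x => -r * gammaKernel α r x
      + (r * c + α - 1) * (gammaKernel α r x / (x + c))) (Ioi 0) := h1.add h2
  have hcont : ContinuousWithinAt g (Ici 0) 0 :=
    (((continuousAt_rpow_const 0 α (.inr hα.le)).mul (by fun_prop)).div (by fun_prop)
      (by positivity)).continuousWithinAt
  have htop : Tendsto g atTop (𝓝 0) := by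
    refine squeeze_zero' ?_ ?_ (tendsto_rpow_mul_exp_neg_mul_atTop_nhds_zero (α - 1) r hr)
    · filter_upwards [eventually_gt_atTop 0] with x hx
      positivity
    · filter_upwards [eventually_gt_atTop 0] with x hx
      rw [rpow_sub_one hx.ne', neg_mul, div_mul_eq_mul_div]
      exact div_le_div_of_nonneg_left (by positivity) hx (by linarith)
  have key := integral_Ioi_of_hasDerivAt_of_tendsto hcont
    (fun x (hx : 0 < x) => hasDerivAt_rpow_mul_exp_neg_mul_div_add hx.ne' (by positivity))
    (h12.add h3) htop
  rw [integral_add h12 h3, integral_add h1 h2, integral_const_mul, integral_const_mul,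
    integral_const_mul, ← gammaStieltjes] at key
  simp only [g, zero_rpow hα.ne', zero_mul, zero_div, sub_zero] at key
  linear_combination key

end GammaKernel

section GammaStieltjes

variable {α r y : ℝ}

lemma gammaStieltjes_nonneg (hy : 0 ≤ y) : 0 ≤ gammaStieltjes α r y :=
  setIntegral_nonneg measurableSet_Ioi fun x (hx : 0 < x) =>
    div_nonneg (gammaKernel_nonneg hx.le) (by positivity)

lemma gammaStieltjes_le (hα : 0 < α) (hr : 0 < r) (hy : 0 < y) :
    gammaStieltjes α r y ≤ (∫ x in Ioi 0, gammaKernel α r x) / y := by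
  rw [← integral_div]
  refine setIntegral_mono_on (by simpa using integrableOn_gammaKernel_div_add_pow hα hr hy 1)
    ((integrableOn_gammaKernel hα hr).div_const y) measurableSet_Ioi fun x (hx : 0 < x) => ?_
  exact div_le_div_of_nonneg_left (gammaKernel_nonneg hx.le) hy (by linarith)

lemma hasDerivAt_gammaStieltjes (hα : 0 < α) (hr : 0 < r) (hy : 0 < y) :
    HasDerivAt (gammaStieltjes α r) (-∫ x in Ioi 0, gammaKernel α r x / (x + y) ^ 2) y := by
  have hmeas : ∀ z > 0, AEStronglyMeasurable (fun x => gammaKernel α r x / (x + z))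
      (volume.restrict (Ioi 0)) := fun z hz =>
    (continuousOn_gammaKernel.div (by fun_prop) fun x (hx : 0 < x) => by
      positivity).aestronglyMeasurable measurableSet_Ioi
  have hint : IntegrableOn (fun x => gammaKernel α r x / (x + y)) (Ioi 0) := by
    simpa using integrableOn_gammaKernel_div_add_pow hα hr hy 1
  have key := hasDerivAt_integral_of_dominated_loc_of_deriv_le (μ := volume.restrict (Ioi 0))
    (F := fun z x => gammaKernel α r x / (x + z))
    (F' := fun z x => -(gammaKernel α r x / (x + z) ^ 2))
    (bound := fun x => gammaKernel α r x / (y / 2) ^ 2) (Ioi_mem_nhds (half_lt_self hy))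
    ((eventually_gt_nhds hy).mono hmeas) hint
    (integrableOn_gammaKernel_div_add_pow hα hr hy 2).aestronglyMeasurable.neg ?_
    ((integrableOn_gammaKernel hα hr).div_const _) ?_
  · have hderiv := key.2
    rw [integral_neg] at hderiv
    exact hderiv
  · filter_upwards [self_mem_ae_restrict measurableSet_Ioi] with x (hx : 0 < x) z (hz : y / 2 < z)
    rw [norm_neg, Real.norm_of_nonneg (div_nonneg (gammaKernel_nonneg hx.le) (by positivity))]
    exact div_le_div_of_nonneg_left (gammaKernel_nonneg hx.le) (by positivity)
      (pow_le_pow_left₀ (by positivity) (by linarith) 2)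
  · filter_upwards [self_mem_ae_restrict measurableSet_Ioi] with x (hx : 0 < x) z (hz : y / 2 < z)
    have hxz : x + z ≠ 0 := by linarith
    have h := (hasDerivAt_const z (gammaKernel α r x)).div ((hasDerivAt_id z).const_add x) hxz
    simp only [id, zero_mul, mul_one, zero_sub] at h
    exact h.congr_deriv (neg_div _ _)

end GammaStieltjes

section UpperIncompleteGamma

variable {β y₀ y : ℝ}

lemma continuousOn_exp_neg_mul_rpow : ContinuousOn (fun t => exp (-t) * t ^ (β - 1)) (Ioi 0) :=
  ContinuousOn.mul (by fun_prop)
    fun t ht => (continuousAt_rpow_const t _ (.inl (ne_of_gt ht))).continuousWithinAt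

lemma integrableOn_exp_neg_mul_rpow_Ioi (hy : 0 < y) (hβ : β ≤ 1) :
    IntegrableOn (fun t => exp (-t) * t ^ (β - 1)) (Ioi y) := by
  refine ((exp_neg_integrableOn_Ioi y one_pos).mul_const (y ^ (β - 1))).mono'
    ((continuousOn_exp_neg_mul_rpow.mono fun t (ht : y < t) => hy.trans ht).aestronglyMeasurable
      measurableSet_Ioi) ?_
  filter_upwards [self_mem_ae_restrict measurableSet_Ioi] with t (ht : y < t)
  rw [Real.norm_of_nonneg (by have := hy.trans ht; positivity), neg_one_mul]
  exact mul_le_mul_of_nonneg_left (rpow_le_rpow_of_nonpos hy ht.le (by linarith)) (exp_pos _).le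

lemma uiGamma_eq_sub_intervalIntegral (hy₀ : 0 < y₀) (hy : 0 < y) (hβ : β ≤ 1) :
    uiGamma β y = uiGamma β y₀ - ∫ t in y₀..y, exp (-t) * t ^ (β - 1) := by
  rw [uiGamma, uiGamma, ← intervalIntegral.integral_interval_add_Ioi
    (integrableOn_exp_neg_mul_rpow_Ioi hy₀ hβ) (integrableOn_exp_neg_mul_rpow_Ioi hy hβ)]
  ring

lemma hasDerivAt_uiGamma (hy : 0 < y) (hβ : β ≤ 1) :
    HasDerivAt (uiGamma β) (-(exp (-y) * y ^ (β - 1))) y := by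
  have hy₀ : 0 < y / 2 := half_pos hy
  have hcont : ContinuousOn (fun t => exp (-t) * t ^ (β - 1)) (Ioi 0) :=
    continuousOn_exp_neg_mul_rpow
  have hii : IntervalIntegrable (fun t => exp (-t) * t ^ (β - 1)) volume (y / 2) y :=
    (hcont.mono fun t ht =>
      hy₀.trans_le (by simpa [(half_lt_self hy).le] using ht.1)).intervalIntegrable
  have hftc := (intervalIntegral.integral_hasDerivAt_right hii
    (hcont.stronglyMeasurableAtFilter isOpen_Ioi y hy)
    (hcont.continuousAt (Ioi_mem_nhds hy))).const_sub (uiGamma β (y / 2))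
  refine hftc.congr_of_eventuallyEq ?_
  filter_upwards [Ioi_mem_nhds hy] with z hz
  exact uiGamma_eq_sub_intervalIntegral hy₀ hz hβ

lemma tendsto_uiGamma_atTop (hβ : β ≤ 1) : Tendsto (uiGamma β) atTop (𝓝 0) := by
  have hlim := (intervalIntegral_tendsto_integral_Ioi 1
    (integrableOn_exp_neg_mul_rpow_Ioi one_pos hβ) tendsto_id).const_sub (uiGamma β 1)
  rw [← uiGamma, sub_self] at hlim
  refine hlim.congr' ?_
  filter_upwards [eventually_gt_atTop 0] with y hy
  exact (uiGamma_eq_sub_intervalIntegral one_pos hy hβ).symm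

end UpperIncompleteGamma

noncomputable def gammaStieltjesDefect (α r y : ℝ) : ℝ :=
  exp (-(r * y)) * y ^ (1 - α) * gammaStieltjes α r y - Gamma α * uiGamma (1 - α) (r * y)

section GammaStieltjesDefect

variable {α r c : ℝ}

lemma hasDerivAt_gammaStieltjesDefect (hα : 0 < α) (hr : 0 < r) (hc : 0 < c) :
    HasDerivAt (gammaStieltjesDefect α r) 0 c := by
  have hexp : HasDerivAt (fun y => exp (-(r * y))) (exp (-(r * c)) * -r) c := by
    simpa using ((hasDerivAt_id c).const_mul r).neg.exp
  have hpow : HasDerivAt (fun y => y ^ (1 - α)) ((1 - α) * c ^ (1 - α - 1)) c :=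
    hasDerivAt_rpow_const (.inl hc.ne')
  have hU : HasDerivAt (fun y => uiGamma (1 - α) (r * y))
      (-(exp (-(r * c)) * (r * c) ^ (1 - α - 1)) * r) c :=
    (hasDerivAt_uiGamma (by positivity) (by linarith)).comp c
      (by simpa using (hasDerivAt_id c).const_mul r)
  refine (((hexp.mul hpow).mul (hasDerivAt_gammaStieltjes hα hr hc)).sub
    (hU.const_mul (Gamma α))).congr_deriv ?_
  have hibp := mul_integral_gammaKernel_div_add_sq hα hr hc
  rw [integral_gammaKernel hα hr, one_div, inv_rpow hr.le, ← rpow_neg hr.le] at hibp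
  simp only [Pi.mul_apply]
  rw [sub_sub_cancel_left, mul_rpow hr.le hc.le, show 1 - α = -α + 1 by ring, rpow_add_one hc.ne']
  linear_combination (-(exp (-(r * c)) * c ^ (-α))) * hibp

lemma tendsto_gammaStieltjesDefect_atTop (hα : 0 < α) (hr : 0 < r) :
    Tendsto (gammaStieltjesDefect α r) atTop (𝓝 0) := by
  set M := ∫ x in Ioi 0, gammaKernel α r x
  have hfirst : Tendsto (fun y => exp (-(r * y)) * y ^ (1 - α) * gammaStieltjes α r y)
      atTop (𝓝 0) := by
    have hbound := (tendsto_rpow_mul_exp_neg_mul_atTop_nhds_zero (-α) r hr).const_mul M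
    rw [mul_zero] at hbound
    refine squeeze_zero' ?_ ?_ hbound
    · filter_upwards [eventually_gt_atTop 0] with y hy
      have := gammaStieltjes_nonneg (α := α) (r := r) hy.le
      positivity
    · filter_upwards [eventually_gt_atTop 0] with y hy
      calc exp (-(r * y)) * y ^ (1 - α) * gammaStieltjes α r y
          ≤ exp (-(r * y)) * y ^ (1 - α) * (M / y) := by
            gcongr; exact gammaStieltjes_le hα hr hy
        _ = M * (y ^ (-α) * exp (-r * y)) := by
            rw [show 1 - α = -α + 1 by ring, rpow_add_one hy.ne', neg_mul]
            field_simp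
  have hsecond : Tendsto (fun y => Gamma α * uiGamma (1 - α) (r * y)) atTop (𝓝 0) := by
    simpa using ((tendsto_uiGamma_atTop (by linarith)).comp
      (tendsto_id.const_mul_atTop hr)).const_mul (Gamma α)
  have hdiff := hfirst.sub hsecond
  rw [sub_zero] at hdiff
  exact hdiff

lemma gammaStieltjesDefect_eq_zero (hα : 0 < α) (hr : 0 < r) (hc : 0 < c) :
    gammaStieltjesDefect α r c = 0 := by
  have hconst : ∀ y ∈ Ioi (0 : ℝ), gammaStieltjesDefect α r y = gammaStieltjesDefect α r c :=
    fun y hy => isOpen_Ioi.is_const_of_deriv_eq_zero isPreconnected_Ioi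
      (fun z hz =>
        (hasDerivAt_gammaStieltjesDefect hα hr hz).differentiableAt.differentiableWithinAt)
      (fun z hz => (hasDerivAt_gammaStieltjesDefect hα hr hz).deriv) hy hc
  refine tendsto_nhds_unique (tendsto_const_nhds.congr' ?_)
    (tendsto_gammaStieltjesDefect_atTop hα hr)
  filter_upwards [eventually_gt_atTop 0] with y hy using (hconst y hy).symm

end GammaStieltjesDefect

section Moment

variable {α r c : ℝ}

lemma gammaStieltjes_eq (hα : 0 < α) (hr : 0 < r) (hc : 0 < c) :
    gammaStieltjes α r c = Gamma α * c ^ (α - 1) * exp (r * c) * uiGamma (1 - α) (r * c) := by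
  have h := gammaStieltjesDefect_eq_zero hα hr hc
  have hinv : c ^ (1 - α) = (c ^ (α - 1))⁻¹ := by rw [← rpow_neg hc.le, neg_sub]
  rw [gammaStieltjesDefect, sub_eq_zero, exp_neg, hinv] at h
  have hpow : c ^ (α - 1) ≠ 0 := by positivity
  field_simp at h
  linear_combination h

lemma integral_sq_div_add_sq_mul_gammaKernel (hα : 0 < α) (hr : 0 < r) (hc : 0 < c) :
    ∫ x in Ioi 0, x ^ 2 / (x + c) ^ 2 * gammaKernel α r x
      = (1 + r * c) * (∫ x in Ioi 0, gammaKernel α r x)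
        - c * (r * c + α + 1) * gammaStieltjes α r c := by
  have h0 := integrableOn_gammaKernel hα hr
  have h1 := (integrableOn_gammaKernel_div_add_pow hα hr hc 1).const_mul (2 * c)
  have h2 := (integrableOn_gammaKernel_div_add_pow hα hr hc 2).const_mul (c ^ 2)
  simp only [pow_one] at h1
  have hsplit : EqOn (fun x => x ^ 2 / (x + c) ^ 2 * gammaKernel α r x)
      (fun x => gammaKernel α r x - 2 * c * (gammaKernel α r x / (x + c))
        + c ^ 2 * (gammaKernel α r x / (x + c) ^ 2)) (Ioi 0) := fun x (hx : 0 < x) => by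
    have : x + c ≠ 0 := by positivity
    field_simp
    ring
  have h01 : IntegrableOn (fun x => gammaKernel α r x - 2 * c * (gammaKernel α r x / (x + c)))
    (Ioi 0) := h0.sub h1
  rw [setIntegral_congr_fun measurableSet_Ioi hsplit, integral_add h01 h2,
    integral_sub h0 h1, integral_const_mul, integral_const_mul, ← gammaStieltjes]
  linear_combination c * mul_integral_gammaKernel_div_add_sq hα hr hc

end Moment

theorem expectation_sq_div_shift_sq (a b c : ℝ) (ha : 0 < a) (hb : b < 0) (hc : 0 < c) :
    (∫ x in Set.Ioi (0 : ℝ), x ^ 2 / (x + c) ^ 2 * gDens a b x)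
      = ((a + 2 - b * c) * (1 - psi a b c) - a) / 2 := by
  have hα : 0 < a / 2 := by positivity
  have hr : 0 < -b / 2 := by linarith
  have hdens : ∀ x, x ^ 2 / (x + c) ^ 2 * gDens a b x = (Gamma (a / 2))⁻¹ * (-b / 2) ^ (a / 2)
      * (x ^ 2 / (x + c) ^ 2 * gammaKernel (a / 2) (-b / 2) x) := fun x => by
    rw [gDens, gammaKernel, show b * x / 2 = -(-b / 2 * x) by ring]
    ring
  simp_rw [hdens]
  rw [integral_const_mul, integral_sq_div_add_sq_mul_gammaKernel hα hr hc,
    integral_gammaKernel hα hr, gammaStieltjes_eq hα hr hc, psi,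
    show -(b * c) / 2 = -b / 2 * c by ring, mul_rpow hr.le hc.le, one_div, inv_rpow hr.le,
    rpow_sub_one hc.ne']
  have hΓ := (Gamma_pos_of_pos hα).ne'
  have hrα : (-b / 2) ^ (a / 2) ≠ 0 := by positivity
  generalize (-b / 2) ^ (a / 2) = P at hrα ⊢
  field_simp
  ring
end

section
/- Let a > 2 and b < 0, and define for c > 0: ψ_c = (−bc/2)^{a/2} e^{−bc/2} Γ(1−a/2, −bc/2), A_c = φ_c^{−1}[[c(ψ_c−1) − a/b, ψ_c−1], [ψ_c−1, ψ_c/c]] with φ_c = ψ_c(1 − a/(bc)) − 1, and L_c = (1/2)[[ (a/c)ψ_c + b(1−ψ_c), (a+2−bc)(1−ψ_c) − a], [(a+2−bc)(1−ψ_c) − a, ψ_c c(a+4−b) − 4c − bc² − 2a/b]]. Then A_c L_c A_c converges, as c → 0⁺, to the matrix Σ^{−1} where Σ = [[−b/(a−2), 1], [1, −a/b]]. -/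
open Real Set

/-- The matrix `A_c`. -/
noncomputable def Amat (a b c : ℝ) : Matrix (Fin 2) (Fin 2) ℝ :=
  (psi a b c * (1 - a / (b * c)) - 1)⁻¹ •
    !![c * (psi a b c - 1) - a / b, psi a b c - 1; psi a b c - 1, psi a b c / c]

/-- The matrix `L_c`. -/
noncomputable def Lmat (a b c : ℝ) : Matrix (Fin 2) (Fin 2) ℝ :=
  (1 / 2 : ℝ) •
    !![a / c * psi a b c + b * (1 - psi a b c), (a + 2 - b * c) * (1 - psi a b c) - a;
       (a + 2 - b * c) * (1 - psi a b c) - a,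
       psi a b c * c * (a + 4 - b) - 4 * c - b * c ^ 2 - 2 * a / b]

/-!
Substituting `t = y s` gives `y ^ (α - 1) * Γ(1 - α, y) = ∫ s in Ioi 1, exp (-(y * s)) * s ^ (-α)`,
which tends to `∫ s in Ioi 1, s ^ (-α) = (α - 1)⁻¹` as `y → 0⁺` by dominated convergence.
With `y = -b c / 2` and `α = a / 2` this gives `ψ_c / c → -b / (a - 2)`, hence `ψ_c → 0`.
Then `φ_c → 2 / (a - 2) = det Σ` and the matrix in `A_c` tends to the adjugate of `Σ`, so
`A_c → Σ⁻¹`, while `L_c → Σ`; therefore `A_c L_c A_c → Σ⁻¹ Σ Σ⁻¹ = Σ⁻¹`.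
-/

open Filter Topology MeasureTheory

lemma Filter.Tendsto.matrix_fin_two {α R : Type*} [TopologicalSpace R] {l : Filter α}
    {f₀₀ f₀₁ f₁₀ f₁₁ : α → R} {x₀₀ x₀₁ x₁₀ x₁₁ : R}
    (h₀₀ : Tendsto f₀₀ l (𝓝 x₀₀)) (h₀₁ : Tendsto f₀₁ l (𝓝 x₀₁))
    (h₁₀ : Tendsto f₁₀ l (𝓝 x₁₀)) (h₁₁ : Tendsto f₁₁ l (𝓝 x₁₁)) :
    Tendsto (fun t => !![f₀₀ t, f₀₁ t; f₁₀ t, f₁₁ t]) l (𝓝 !![x₀₀, x₀₁; x₁₀, x₁₁]) :=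
  (h₀₀.matrixVecCons (h₀₁.matrixVecCons tendsto_const_nhds)).matrixVecCons
    ((h₁₀.matrixVecCons (h₁₁.matrixVecCons tendsto_const_nhds)).matrixVecCons tendsto_const_nhds)

lemma tendsto_const_mul_nhdsGT_zero {r : ℝ} (hr : 0 < r) :
    Tendsto (r * ·) (𝓝[>] 0) (𝓝[>] 0) := by
  simpa only [comap_mulLeft_nhdsGT_zero hr] using tendsto_comap (f := (r * ·)) (x := 𝓝[>] 0)

lemma rpow_sub_one_mul_uiGamma_eq_integral (α : ℝ) {y : ℝ} (hy : 0 < y) :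
    y ^ (α - 1) * uiGamma (1 - α) y = ∫ s in Ioi (1 : ℝ), exp (-(y * s)) * s ^ (-α) := by
  have hsubst : ∫ s in Ioi (1 : ℝ), exp (-(y * s)) * s ^ (-α)
      = y ^ α * ∫ s in Ioi (1 : ℝ), exp (-(y * s)) * (y * s) ^ (-α) := by
    rw [← integral_const_mul]
    refine setIntegral_congr_fun measurableSet_Ioi fun s hs => ?_
    rw [Real.mul_rpow hy.le (zero_lt_one.trans hs).le, Real.rpow_neg hy.le]
    field_simp
  rw [hsubst, integral_comp_mul_left_Ioi (fun t => exp (-t) * t ^ (-α)) 1 hy, mul_one,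
    smul_eq_mul, uiGamma, Real.rpow_sub_one hy.ne', sub_sub_cancel_left]
  field_simp

lemma tendsto_rpow_sub_one_mul_uiGamma {α : ℝ} (hα : 1 < α) :
    Tendsto (fun y => y ^ (α - 1) * uiGamma (1 - α) y) (𝓝[>] 0) (𝓝 (α - 1)⁻¹) := by
  have hlim : Tendsto (fun y => ∫ s in Ioi (1 : ℝ), exp (-(y * s)) * s ^ (-α)) (𝓝[>] 0)
      (𝓝 (∫ s in Ioi (1 : ℝ), s ^ (-α))) := by
    refine tendsto_integral_filter_of_dominated_convergence (fun s => s ^ (-α))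
      (Eventually.of_forall fun y => (by fun_prop : Measurable _).aestronglyMeasurable) ?_
      (integrableOn_Ioi_rpow_of_lt (by linarith) one_pos) (Eventually.of_forall fun s => ?_)
    · filter_upwards [self_mem_nhdsWithin] with y (hy : 0 < y)
      filter_upwards [ae_restrict_mem measurableSet_Ioi] with s (hs : 1 < s)
      have hs' : 0 ≤ s ^ (-α) := rpow_nonneg (zero_lt_one.trans hs).le _
      rw [norm_mul, norm_of_nonneg (exp_pos _).le, norm_of_nonneg hs']
      exact mul_le_of_le_one_left hs' (exp_le_one_iff.2 (by nlinarith))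
    · simpa using ((by fun_prop : Continuous fun y => exp (-(y * s)) * s ^ (-α)).tendsto 0).mono_left
        nhdsWithin_le_nhds
  have hval : ∫ s in Ioi (1 : ℝ), s ^ (-α) = (α - 1)⁻¹ := by
    rw [integral_Ioi_rpow_of_lt (by linarith) one_pos, one_rpow, show -α + 1 = -(α - 1) by ring,
      neg_div_neg_eq, one_div]
  rw [hval] at hlim
  exact hlim.congr' (eventually_nhdsWithin_of_forall fun y hy =>
    (rpow_sub_one_mul_uiGamma_eq_integral α hy).symm)

lemma tendsto_psi_div_self {a b : ℝ} (ha : 2 < a) (hb : b < 0) :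
    Tendsto (fun c => psi a b c / c) (𝓝[>] 0) (𝓝 (-b / (a - 2))) := by
  have hy : Tendsto (fun c => -(b * c) / 2) (𝓝[>] 0) (𝓝[>] 0) :=
    (tendsto_const_mul_nhdsGT_zero (by linarith : 0 < -b / 2)).congr fun c => by ring
  have hexp : Tendsto (fun c => exp (-(b * c) / 2)) (𝓝[>] 0) (𝓝 1) := by
    have h := (continuous_exp.tendsto 0).comp (hy.mono_right nhdsWithin_le_nhds)
    rwa [exp_zero] at h
  have hΓ := (tendsto_rpow_sub_one_mul_uiGamma (by linarith : 1 < a / 2)).comp hy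
  have hprod := (hexp.mul hΓ).const_mul (-b / 2)
  have hval : -b / 2 * (1 * (a / 2 - 1)⁻¹) = -b / (a - 2) := by
    have : a - 2 ≠ 0 := by linarith
    field_simp
  rw [hval] at hprod
  refine hprod.congr' (eventually_nhdsWithin_of_forall fun c (hc : 0 < c) => ?_)
  have hy0 : 0 < -(b * c) / 2 := by nlinarith
  simp only [Function.comp_apply, psi]
  rw [Real.rpow_sub_one hy0.ne']
  field_simp [hb.ne]

lemma tendsto_psi {a b : ℝ} (ha : 2 < a) (hb : b < 0) :
    Tendsto (psi a b) (𝓝[>] 0) (𝓝 0) := by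
  have h := (tendsto_psi_div_self ha hb).mul (tendsto_id.mono_left nhdsWithin_le_nhds)
  rw [mul_zero] at h
  exact h.congr' (eventually_nhdsWithin_of_forall fun c (hc : 0 < c) => div_mul_cancel₀ _ hc.ne')

noncomputable def sigmaMat (a b : ℝ) : Matrix (Fin 2) (Fin 2) ℝ := !![-b / (a - 2), 1; 1, -a / b]

lemma det_sigmaMat {a b : ℝ} (ha : a ≠ 2) (hb : b ≠ 0) : (sigmaMat a b).det = 2 / (a - 2) := by
  have : a - 2 ≠ 0 := sub_ne_zero.2 ha
  rw [sigmaMat, Matrix.det_fin_two_of]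
  field_simp
  ring

lemma inv_sigmaMat {a b : ℝ} (ha : a ≠ 2) (hb : b ≠ 0) :
    (sigmaMat a b)⁻¹ = (2 / (a - 2))⁻¹ • !![-a / b, -1; -1, -b / (a - 2)] := by
  rw [Matrix.inv_def, det_sigmaMat ha hb, sigmaMat, Matrix.adjugate_fin_two_of,
    Ring.inverse_eq_inv']

lemma tendsto_Amat {a b : ℝ} (ha : 2 < a) (hb : b < 0) :
    Tendsto (Amat a b) (𝓝[>] 0) (𝓝 (sigmaMat a b)⁻¹) := by
  have hψ := tendsto_psi ha hb
  have hψc := tendsto_psi_div_self ha hb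
  have hc : Tendsto (fun c : ℝ => c) (𝓝[>] 0) (𝓝 0) := tendsto_id.mono_left nhdsWithin_le_nhds
  have hφ : Tendsto (fun c => psi a b c * (1 - a / (b * c)) - 1) (𝓝[>] 0) (𝓝 (2 / (a - 2))) := by
    have h := (hψ.sub (hψc.const_mul (a / b))).sub_const 1
    have hval : 0 - a / b * (-b / (a - 2)) - 1 = 2 / (a - 2) := by
      have : a - 2 ≠ 0 := by linarith
      field_simp [hb.ne]
      ring
    rw [hval] at h
    refine h.congr' (eventually_nhdsWithin_of_forall fun c (hpos : 0 < c) => ?_)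
    field_simp [hb.ne, hpos.ne']
  rw [inv_sigmaMat ha.ne' hb.ne]
  refine (hφ.inv₀ (div_pos two_pos (by linarith)).ne').smul
    (Tendsto.matrix_fin_two ?_ ?_ ?_ hψc)
  · simpa [neg_div] using (hc.mul (hψ.sub_const 1)).sub_const (a / b)
  · simpa using hψ.sub_const 1
  · simpa using hψ.sub_const 1

lemma tendsto_Lmat {a b : ℝ} (ha : 2 < a) (hb : b < 0) :
    Tendsto (Lmat a b) (𝓝[>] 0) (𝓝 (sigmaMat a b)) := by
  have hψ := tendsto_psi ha hb
  have hψc := tendsto_psi_div_self ha hb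
  have hc : Tendsto (fun c : ℝ => c) (𝓝[>] 0) (𝓝 0) := tendsto_id.mono_left nhdsWithin_le_nhds
  have h₀₀ : Tendsto (fun c => a / c * psi a b c + b * (1 - psi a b c)) (𝓝[>] 0)
      (𝓝 (a * (-b / (a - 2)) + b * (1 - 0))) :=
    ((hψc.const_mul a).add ((hψ.const_sub 1).const_mul b)).congr' <|
      eventually_nhdsWithin_of_forall fun c (hpos : 0 < c) => by field_simp [hpos.ne']
  have h₀₁ : Tendsto (fun c => (a + 2 - b * c) * (1 - psi a b c) - a) (𝓝[>] 0)
      (𝓝 ((a + 2 - b * 0) * (1 - 0) - a)) :=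
    (((hc.const_mul b).const_sub _).mul (hψ.const_sub 1)).sub_const a
  have h₁₁ : Tendsto (fun c => psi a b c * c * (a + 4 - b) - 4 * c - b * c ^ 2 - 2 * a / b)
      (𝓝[>] 0) (𝓝 (0 * 0 * (a + 4 - b) - 4 * 0 - b * 0 ^ 2 - 2 * a / b)) :=
    ((((hψ.mul hc).mul_const _).sub (hc.const_mul 4)).sub ((hc.pow 2).const_mul b)).sub_const _
  have hlim : (1 / 2 : ℝ) • !![a * (-b / (a - 2)) + b * (1 - 0), (a + 2 - b * 0) * (1 - 0) - a;
      (a + 2 - b * 0) * (1 - 0) - a, 0 * 0 * (a + 4 - b) - 4 * 0 - b * 0 ^ 2 - 2 * a / b] =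
      sigmaMat a b := by
    have : a - 2 ≠ 0 := by linarith
    ext i j
    fin_cases i <;> fin_cases j <;> simp [sigmaMat]
    · field_simp
      ring
    · field_simp
  rw [← hlim]
  exact (h₀₀.matrix_fin_two h₀₁ h₀₁ h₁₁).const_smul (1 / 2 : ℝ)

theorem ALA_tendsto_mle_covariance (a b : ℝ) (ha : 2 < a) (hb : b < 0) :
    Filter.Tendsto (fun c : ℝ => Amat a b c * Lmat a b c * Amat a b c)
      (nhdsWithin 0 (Set.Ioi 0))
      (nhds (!![-b / (a - 2), 1; 1, -a / b] : Matrix (Fin 2) (Fin 2) ℝ)⁻¹) := by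
  have hdet : IsUnit (sigmaMat a b).det := by
    rw [det_sigmaMat ha.ne' hb.ne, isUnit_iff_ne_zero]
    exact div_ne_zero two_ne_zero (by linarith)
  have h := ((tendsto_Amat ha hb).mul (tendsto_Lmat ha hb)).mul (tendsto_Amat ha hb)
  rwa [Matrix.nonsing_inv_mul _ hdet, one_mul] at h
end
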